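/- arXiv:1308.4223 — 3 statements merged into one kernel-verified Lean document; each statement's English description precedes it below -/
import Mathlib

section
/- Let X and Y be m × m complex matrices, M = diag(I, 2I, 3I) (blocks of size m), N_X the 3m × 2m block matrix with block rows [I, 0], [I, I], [I, X], and N_Y defined analogously with Y in place of X. Then there exist unitary matrices S₁, S₂ (of size 3m) and S₃ (of size 2m) with S₂⁻¹ M S₁ = M and S₂⁻¹ N_X S₃ = N_Y if and only if X and Y are unitarily similar, i.e., there exists a unitary m × m matrix C with C⁻¹ X C = Y. -/
/-- The block-diagonal matrix `diag(I_m, 2 I_m, 3 I_m)`. -/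
noncomputable def Mblk (m : ℕ) : Matrix (Fin 3 × Fin m) (Fin 3 × Fin m) ℂ :=
  Matrix.kroneckerMap (· * ·) (Matrix.diagonal ![1, 2, 3]) (1 : Matrix (Fin m) (Fin m) ℂ)

/-- The 3m × 2m block matrix with block rows [I 0], [I I], [I X]. -/
noncomputable def Nblk (m : ℕ) (X : Matrix (Fin m) (Fin m) ℂ) :
    Matrix (Fin 3 × Fin m) (Fin 2 × Fin m) ℂ :=
  Matrix.of fun p q =>
    (![![(1 : Matrix (Fin m) (Fin m) ℂ), 0], ![1, 1], ![1, X]] p.1 q.1) p.2 q.2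

/-!
Taking adjoints in `M S₁ = S₂ M` shows that `S₁` commutes with `M* M = diag(I, 4I, 9I)`. Hence
`S₁ = diag(U₀, U₁, U₂)` is block diagonal, so it commutes with `M`, and the invertibility of `M`
gives `S₂ = S₁`. Writing `S₃ = [A B; C D]`, the block rows of `N_X S₃ = S₁ N_Y` read
`[A, B] = [U₀, 0]`, `[A + C, B + D] = [U₁, U₁]` and `[A + X C, B + X D] = [U₂, U₂ Y]`. From `B = 0`
the unitarity of `S₃` gives `A A* = 1`, hence `A* A = 1`, and then `A* A + C* C = 1` forces `C = 0`.
So `D = U₁ = A = U₂` and `X A = A Y` with `A` unitary. Conversely, `I ⊗ C` commutes with `M` and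
conjugates `N_X` to `N_{C* X C}`.
-/

open Matrix
open scoped Kronecker

section StarMonoid

variable {R : Type*} [Monoid R] [StarMul R]

theorem commute_star_mul_self_of_mul_eq_mul {M U V : R} (hU : U ∈ unitary R)
    (hV : V ∈ unitary R) (h : M * U = V * M) : Commute (star M * M) U := by
  have h' : star M * V = U * star M := by
    have := congrArg star h
    simp only [star_mul] at this
    calc star M * V = U * (star U * star M) * V := by
          rw [← mul_assoc, Unitary.mul_star_self_of_mem hU, one_mul]
      _ = U * star M := by
          rw [this, mul_assoc, mul_assoc, Unitary.star_mul_self_of_mem hV, mul_one]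
  calc star M * M * U = star M * V * M := by rw [mul_assoc, h, ← mul_assoc]
    _ = U * (star M * M) := by rw [h', mul_assoc]

end StarMonoid

namespace Matrix

section Diagonal

variable {n α : Type*} [Fintype n] [DecidableEq n] [CommRing α] [NoZeroDivisors α]

theorem commute_diagonal_iff {d : n → α} {A : Matrix n n α} :
    Commute (diagonal d) A ↔ ∀ i j, d i ≠ d j → A i j = 0 := by
  simp only [commute_iff_eq, ← Matrix.ext_iff, diagonal_mul, mul_diagonal]
  refine forall₂_congr fun i j => ⟨fun h hij => ?_, fun h => ?_⟩
  · have : (d i - d j) * A i j = 0 := by linear_combination h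
    exact (mul_eq_zero.mp this).resolve_left (sub_ne_zero.mpr hij)
  · by_cases hij : d i = d j
    · rw [hij, mul_comm]
    · rw [h hij, mul_zero, zero_mul]

theorem commute_diagonal_of_commute_diagonal_comp {d : n → α} {A : Matrix n n α} {f : α → α}
    (hf : Set.InjOn f (Set.range d)) (h : Commute (diagonal (f ∘ d)) A) :
    Commute (diagonal d) A :=
  commute_diagonal_iff.mpr fun i j hij =>
    commute_diagonal_iff.mp h i j fun h' => hij (hf ⟨i, rfl⟩ ⟨j, rfl⟩ h')

end Diagonal

theorem mul_eq_mul_of_star_mul_mul_eq {l n p α : Type*} [Fintype l] [Fintype n] [DecidableEq l]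
    [Semiring α] [StarRing α] {U : Matrix l l α} {M : Matrix l n α} {V : Matrix n p α}
    {N : Matrix l p α} (hU : U ∈ unitary (Matrix l l α)) (h : star U * M * V = N) :
    M * V = U * N := by
  rw [← h, Matrix.mul_assoc, ← Matrix.mul_assoc U, Unitary.mul_star_self_of_mem hU,
    Matrix.one_mul]

section Blocks

variable {I J K L P R : Type*}

theorem comp_symm_mul [NonUnitalNonAssocSemiring R] [Fintype J] [Fintype K]
    (A : Matrix (I × K) (J × K) R) (B : Matrix (J × K) (P × K) R) :
    (comp I P K K R).symm (A * B) = (comp I J K K R).symm A * (comp J P K K R).symm B := by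
  ext i j k l
  simp [mul_apply, sum_apply, Fintype.sum_prod_type]

theorem comp_symm_conjTranspose [Star R] (A : Matrix (I × K) (J × K) R) :
    (comp J I K K R).symm Aᴴ = ((comp I J K K R).symm A)ᴴ :=
  rfl

theorem comp_symm_one [DecidableEq I] [DecidableEq K] [Zero R] [One R] :
    (comp I I K K R).symm 1 = 1 :=
  (Equiv.symm_apply_eq _).mpr comp_one.symm

theorem comp_symm_mem_unitary [Fintype I] [Fintype K] [DecidableEq I] [DecidableEq K]
    [Semiring R] [StarRing R] {A : Matrix (I × K) (I × K) R} (hA : A ∈ unitary _) :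
    (comp I I K K R).symm A ∈ unitary (Matrix I I (Matrix K K R)) := by
  simp only [Unitary.mem_iff, star_eq_conjTranspose, ← comp_symm_conjTranspose,
    ← comp_symm_mul, ← comp_symm_one]
  exact ⟨congrArg _ hA.1, congrArg _ hA.2⟩

theorem comp_symm_eq_diagonal [DecidableEq I] [Zero R] {A : Matrix (I × K) (I × L) R}
    (hA : ∀ p q, p.1 ≠ q.1 → A p q = 0) :
    (comp I I K L R).symm A = diagonal fun i => (comp I I K L R).symm A i i := by
  ext i j k l
  by_cases hij : i = j
  · subst hij; simp
  · simp [diagonal_apply_ne _ hij, hA (i, k) (j, l) hij]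

theorem comp_symm_one_kronecker [DecidableEq I] [MulZeroOneClass R] (C : Matrix K L R) :
    (comp I I K L R).symm ((1 : Matrix I I R) ⊗ₖ C) = diagonal fun _ => C := by
  ext i j k l
  by_cases hij : i = j
  · subst hij; simp
  · simp [diagonal_apply_ne _ hij, one_apply_ne hij]

theorem star_one_kronecker_mul_comp_mul [Fintype I] [Fintype J] [Fintype K]
    [DecidableEq I] [DecidableEq J] [Semiring R] [StarRing R] (C : Matrix K K R)
    (A : Matrix I J (Matrix K K R)) :
    star ((1 : Matrix I I R) ⊗ₖ C) * comp I J K K R A * ((1 : Matrix J J R) ⊗ₖ C) =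
      comp I J K K R (A.map fun a => star C * a * C) := by
  apply (comp I J K K R).symm.injective
  rw [Equiv.symm_apply_apply, comp_symm_mul, comp_symm_mul, star_eq_conjTranspose,
    comp_symm_conjTranspose, comp_symm_one_kronecker, comp_symm_one_kronecker,
    diagonal_conjTranspose]
  ext i j : 2
  simp [star_eq_conjTranspose, mul_assoc]

end Blocks

end Matrix

def Nblocks {n R : Type*} [DecidableEq n] [Zero R] [One R] (X : Matrix n n R) :
    Matrix (Fin 3) (Fin 2) (Matrix n n R) :=
  of ![![1, 0], ![1, 1], ![1, X]]

section Nblocks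

open scoped ComplexOrder

variable {n 𝕜 : Type*} [Fintype n] [DecidableEq n] [RCLike 𝕜]

theorem exists_unitary_conj_of_Nblocks_mul {X Y : Matrix n n 𝕜}
    {S : Matrix (Fin 2) (Fin 2) (Matrix n n 𝕜)} {u : Fin 3 → Matrix n n 𝕜} (hS : S ∈ unitary _)
    (h : Nblocks X * S = diagonal u * Nblocks Y) :
    ∃ C ∈ unitaryGroup n 𝕜, C⁻¹ * X * C = Y := by
  have block (i j) := congrFun (congrFun h i) j
  simp only [Nblocks] at block
  have h01 : S 0 1 = 0 := by simpa [mul_apply, Fin.sum_univ_succ] using block 0 1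
  have h10 : S 0 0 + S 1 0 = u 1 := by simpa [mul_apply, Fin.sum_univ_succ] using block 1 0
  have h11 : S 1 1 = u 1 := by simpa [mul_apply, Fin.sum_univ_succ, h01] using block 1 1
  have h20 : S 0 0 + X * S 1 0 = u 2 := by simpa [mul_apply, Fin.sum_univ_succ] using block 2 0
  have h21 : X * S 1 1 = u 2 * Y := by simpa [mul_apply, Fin.sum_univ_succ, h01] using block 2 1
  have hA : S 0 0 * (S 0 0)ᴴ = 1 := by
    simpa [mul_apply, Fin.sum_univ_succ, h01, star_eq_conjTranspose] using
      congrFun (congrFun hS.2 0) 0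
  have hA' : (S 0 0)ᴴ * S 0 0 = 1 := mul_eq_one_comm.mp hA
  have hC : S 1 0 = 0 := by
    have : (S 0 0)ᴴ * S 0 0 + (S 1 0)ᴴ * S 1 0 = 1 := by
      simpa [mul_apply, Fin.sum_univ_succ, star_eq_conjTranspose] using
        congrFun (congrFun hS.1 0) 0
    rwa [hA', add_eq_left, conjTranspose_mul_self_eq_zero] at this
  simp only [hC, mul_zero, add_zero] at h10 h20
  have hXA : X * S 0 0 = S 0 0 * Y := by
    calc X * S 0 0 = X * S 1 1 := by rw [h10, h11]
      _ = S 0 0 * Y := by rw [h21, h20]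
  refine ⟨S 0 0, mem_unitaryGroup_iff'.mpr hA', ?_⟩
  rw [inv_eq_left_inv hA', mul_assoc, hXA, ← mul_assoc, hA', one_mul]

end Nblocks

section Mblk

variable {m : ℕ}

theorem Mblk_eq_diagonal : Mblk m = diagonal fun p => ![1, 2, 3] p.1 := by
  rw [Mblk, ← diagonal_one, diagonal_kronecker_diagonal]
  simp only [mul_one]

theorem isUnit_Mblk : IsUnit (Mblk m) := by
  rw [Mblk_eq_diagonal, isUnit_diagonal, Pi.isUnit_iff]
  rintro ⟨i, _⟩
  fin_cases i <;> norm_num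

theorem commute_Mblk_of_commute_star_mul_self {S : Matrix (Fin 3 × Fin m) (Fin 3 × Fin m) ℂ}
    (h : Commute (star (Mblk m) * Mblk m) S) : Commute (Mblk m) S := by
  rw [Mblk_eq_diagonal, star_eq_conjTranspose, diagonal_conjTranspose, diagonal_mul_diagonal] at h
  rw [Mblk_eq_diagonal]
  refine commute_diagonal_of_commute_diagonal_comp (f := fun z => star z * z) ?_ h
  rintro _ ⟨⟨i, _⟩, rfl⟩ _ ⟨⟨j, _⟩, rfl⟩
  fin_cases i <;> fin_cases j <;> norm_num

theorem commute_Mblk_one_kronecker (C : Matrix (Fin m) (Fin m) ℂ) :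
    Commute (Mblk m) (1 ⊗ₖ C) := by
  rw [Commute, SemiconjBy, Mblk, ← mul_kronecker_mul, ← mul_kronecker_mul, one_mul, mul_one,
    one_mul, mul_one]

theorem Nblk_eq_comp (X : Matrix (Fin m) (Fin m) ℂ) : Nblk m X = comp _ _ _ _ ℂ (Nblocks X) :=
  rfl

theorem exists_unitary_conj_of_Nblk_mul {X Y : Matrix (Fin m) (Fin m) ℂ}
    {S₁ : Matrix (Fin 3 × Fin m) (Fin 3 × Fin m) ℂ} {S₃ : Matrix (Fin 2 × Fin m) (Fin 2 × Fin m) ℂ}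
    (hS₁ : Commute (Mblk m) S₁) (hS₃ : S₃ ∈ unitaryGroup _ ℂ)
    (h : Nblk m X * S₃ = S₁ * Nblk m Y) :
    ∃ C ∈ unitaryGroup (Fin m) ℂ, C⁻¹ * X * C = Y := by
  have hblock : ∀ p q : Fin 3 × Fin m, p.1 ≠ q.1 → S₁ p q = 0 := by
    rw [Mblk_eq_diagonal, commute_diagonal_iff] at hS₁
    rintro ⟨i, a⟩ ⟨j, b⟩ hij
    refine hS₁ _ _ ?_
    revert hij
    fin_cases i <;> fin_cases j <;> norm_num
  have hblocks := congrArg (comp _ _ _ _ ℂ).symm h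
  rw [comp_symm_mul, comp_symm_mul, comp_symm_eq_diagonal hblock, Nblk_eq_comp, Nblk_eq_comp,
    Equiv.symm_apply_apply, Equiv.symm_apply_apply] at hblocks
  exact exists_unitary_conj_of_Nblocks_mul (comp_symm_mem_unitary hS₃) hblocks

theorem star_one_kronecker_mul_Nblk_mul {C : Matrix (Fin m) (Fin m) ℂ}
    (hC : C ∈ unitaryGroup (Fin m) ℂ) (X : Matrix (Fin m) (Fin m) ℂ) :
    star ((1 : Matrix (Fin 3) (Fin 3) ℂ) ⊗ₖ C) * Nblk m X * ((1 : Matrix (Fin 2) (Fin 2) ℂ) ⊗ₖ C) =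
      Nblk m (star C * X * C) := by
  rw [Nblk_eq_comp, Nblk_eq_comp, star_one_kronecker_mul_comp_mul]
  congr 1
  ext i j : 1
  fin_cases i <;> fin_cases j <;> simp [Nblocks, hC.1]

end Mblk

theorem stmt_9 {m : ℕ} (X Y : Matrix (Fin m) (Fin m) ℂ) :
    (∃ (S₁ S₂ : Matrix (Fin 3 × Fin m) (Fin 3 × Fin m) ℂ)
        (S₃ : Matrix (Fin 2 × Fin m) (Fin 2 × Fin m) ℂ),
      S₁ ∈ Matrix.unitaryGroup (Fin 3 × Fin m) ℂ ∧
      S₂ ∈ Matrix.unitaryGroup (Fin 3 × Fin m) ℂ ∧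
      S₃ ∈ Matrix.unitaryGroup (Fin 2 × Fin m) ℂ ∧
      S₂⁻¹ * Mblk m * S₁ = Mblk m ∧ S₂⁻¹ * Nblk m X * S₃ = Nblk m Y) ↔
    (∃ C ∈ Matrix.unitaryGroup (Fin m) ℂ, C⁻¹ * X * C = Y) := by
  constructor
  · rintro ⟨S₁, S₂, S₃, hS₁, hS₂, hS₃, hM, hN⟩
    rw [inv_eq_left_inv hS₂.1] at hM hN
    have hMS := mul_eq_mul_of_star_mul_mul_eq hS₂ hM
    have hcomm : Commute (Mblk m) S₁ :=
      commute_Mblk_of_commute_star_mul_self (commute_star_mul_self_of_mul_eq_mul hS₁ hS₂ hMS)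
    obtain rfl : S₂ = S₁ := (isUnit_Mblk.mul_left_inj.mp (hcomm.eq.symm.trans hMS)).symm
    exact exists_unitary_conj_of_Nblk_mul hcomm hS₃ (mul_eq_mul_of_star_mul_mul_eq hS₂ hN)
  · rintro ⟨C, hC, rfl⟩
    have hK₃ : (1 : Matrix (Fin 3) (Fin 3) ℂ) ⊗ₖ C ∈ unitary _ :=
      kronecker_mem_unitary (one_mem _) hC
    have hK₂ : (1 : Matrix (Fin 2) (Fin 2) ℂ) ⊗ₖ C ∈ unitary _ :=
      kronecker_mem_unitary (one_mem _) hC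
    refine ⟨_, _, _, hK₃, hK₃, hK₂, ?_, ?_⟩ <;> rw [inv_eq_left_inv hK₃.1]
    · exact (commute_unitary_iff_star_left_conjugate hK₃).mp (commute_Mblk_one_kronecker C).symm
    · rw [inv_eq_left_inv hC.1]
      exact star_one_kronecker_mul_Nblk_mul hC X
end

section
/- Let A : U₁ → U₂ and B : U₃ → U₂ be linear maps of finite-dimensional vector spaces over a field F (a chain U₁ → U₂ ← U₃). Then the representation (U₁, U₂, U₃, A, B) decomposes as a direct sum of indecomposable subrepresentations, each of which is isomorphic to one of the representations L₁₁ = (F,0,0), L₂₂ = (0,F,0), L₃₃ = (0,0,F), L₁₂ = (F→F, 0) with identity map, L₂₃ = (0, F←F) with identity map, or L₁₃ = (F→F←F) with both maps the identity. -/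
/-!
Choose a basis `S` of `U₂` that is adapted to both `range A` and `range B`, i.e. `S ∩ range A`
spans `range A` and `S ∩ range B` spans `range B`; it exists because a basis of
`range A ⊓ range B` extends to bases of `range A` and of `range B` whose union is still
independent. Each `y ∈ S` spans a line of `U₂`; lift it along `A` (resp. `B`) when it lies in the
range and take `0` otherwise. The lifts along `A` together with a basis of `ker A` form a basis of
`U₁`, and similarly for `U₃`. The lines through these vectors, grouped by `y ∈ S` or by a kernel
vector, are the summands `L₂₂, L₁₂, L₂₃, L₁₃` (according to which ranges contain `y`) and
`L₁₁, L₃₃`.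
-/

open Submodule Set Function

section LinearIndependence

variable {R M N : Type*} [Ring R] [AddCommGroup M] [Module R M] [AddCommGroup N] [Module R N]
  {κ κ' : Type*}

theorem Submodule.map_span_singleton (f : M →ₗ[R] N) (x : M) : map f (R ∙ x) = R ∙ f x := by
  rw [map_span, image_singleton]

theorem Submodule.map_span_singleton_le {f : M →ₗ[R] N} {x : M} {y : N} (h : x = 0 ∨ f x = y) :
    map f (R ∙ x) ≤ R ∙ y := by
  rcases h with rfl | h
  · simp
  · rw [map_span_singleton, h]

theorem linearIndependent_sum_elim_of_span_eq_ker (T : M →ₗ[R] N) {x : κ → M} {p : κ' → M}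
    (hx : LinearIndependent R (T ∘ x)) (hp : LinearIndependent R p)
    (hpT : span R (range p) = LinearMap.ker T) : LinearIndependent R (Sum.elim x p) :=
  (hx.of_comp T).sum_type hp (hpT ▸ Submodule.range_ker_disjoint hx)

theorem span_range_sum_elim_of_span_eq_ker (T : M →ₗ[R] N) {x : κ → M} {p : κ' → M}
    (hx : span R (range (T ∘ x)) = LinearMap.range T) (hpT : span R (range p) = LinearMap.ker T) :
    span R (range (Sum.elim x p)) = ⊤ := by
  rw [Sum.elim_range, span_union, hpT, ← codisjoint_iff]
  exact map_eq_range_iff.1 (by rw [map_span, ← range_comp, hx])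

theorem DirectSum.isInternal_span_singleton_of_comp [Nontrivial R] {ι : Type*} [DecidableEq ι]
    {v : ι → M} {b : κ → M} (j : κ → ι) (hvj : ∀ k, v (j k) = b k) (hb : LinearIndependent R b)
    (hspan : span R (range b) = ⊤) (hsupp : ∀ i, v i ≠ 0 → i ∈ range j) :
    DirectSum.IsInternal fun i => R ∙ v i := by
  rw [DirectSum.isInternal_submodule_iff_iSupIndep_and_iSup_eq_top]
  constructor
  · rw [← iSupIndep_ne_bot]
    refine iSupIndep.comp' (f := fun k => ⟨j k, by simpa [hvj] using hb.ne_zero k⟩) ?_ ?_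
    · simpa [comp_def, hvj] using hb.iSupIndep_span_singleton
    · rintro ⟨i, hi⟩
      obtain ⟨k, rfl⟩ := hsupp i (by simpa using hi)
      exact ⟨k, rfl⟩
  · rw [eq_top_iff, ← hspan, span_range_eq_iSup]
    exact iSup_le fun k => hvj k ▸ le_iSup (fun i => R ∙ v i) (j k)

theorem DirectSum.isInternal_span_sum_elim_zero [Nontrivial R] {κ' : Type*}
    [DecidableEq (κ ⊕ κ')] {b : κ → M} (hb : LinearIndependent R b)
    (hspan : span R (range b) = ⊤) :
    DirectSum.IsInternal fun i : κ ⊕ κ' => R ∙ Sum.elim b 0 i := by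
  refine isInternal_span_singleton_of_comp Sum.inl (fun _ => rfl) hb hspan ?_
  rintro (k | c) h
  exacts [⟨k, rfl⟩, absurd rfl h]

end LinearIndependence

theorem exists_linearIndepOn_id_span_inter_eq {K V : Type*} [DivisionRing K] [AddCommGroup V]
    [Module K V] (P Q : Submodule K V) :
    ∃ S : Set V, LinearIndepOn K id S ∧ span K S = ⊤ ∧ span K (S ∩ P) = P ∧ span K (S ∩ Q) = Q := by
  obtain ⟨s, hs_le, hs_span, hs⟩ := exists_linearIndependent K ((P ⊓ Q : Submodule K V) : Set V)
  rw [span_eq] at hs_span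
  obtain ⟨sP, hsP_le, hs_sP, hP_sP, hsP⟩ :=
    exists_linearIndepOn_id_extension hs (hs_le.trans inter_subset_left)
  obtain ⟨sQ, hsQ_le, hs_sQ, hQ_sQ, hsQ⟩ :=
    exists_linearIndepOn_id_extension hs (hs_le.trans inter_subset_right)
  -- `span (sQ \ s) ≤ Q` meets `P` only inside `P ⊓ Q = span s`, and `span s ⊓ span (sQ \ s) = ⊥`.
  have hunion : LinearIndepOn K id (sP ∪ sQ) := by
    rw [← union_sdiff_cancel hs_sQ] at hsQ
    obtain ⟨-, hdiff, hdisj⟩ := (linearIndepOn_id_union_iff disjoint_sdiff_right).1 hsQ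
    have hY : span K (sQ \ s) ≤ Q := span_le.2 (sdiff_subset.trans hsQ_le)
    have hPY : Disjoint P (span K (sQ \ s)) := by
      rw [disjoint_iff, ← inf_eq_right.2 hY, ← inf_assoc, ← hs_span]
      exact hdisj.eq_bot
    rw [← union_sdiff_self]
    refine hsP.id_union (hdiff.mono (sdiff_subset_sdiff_right hs_sP)) ?_
    rw [le_antisymm (span_le.2 hsP_le) hP_sP]
    exact hPY.mono_right (span_mono (sdiff_subset_sdiff_right hs_sP))
  obtain ⟨S, -, hPQ_S, hS_top, hS⟩ := exists_linearIndepOn_id_extension hunion (subset_univ _)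
  refine ⟨S, hS, eq_top_iff.2 fun x _ => hS_top trivial, ?_, ?_⟩
  · exact le_antisymm (span_le.2 inter_subset_right)
      (hP_sP.trans (span_mono (subset_inter (subset_union_left.trans hPQ_S) hsP_le)))
  · exact le_antisymm (span_le.2 inter_subset_right)
      (hQ_sQ.trans (span_mono (subset_inter (subset_union_right.trans hPQ_S) hsQ_le)))

section Lift

variable {R M N : Type*} [Ring R] [AddCommGroup M] [Module R M] [AddCommGroup N] [Module R N]

open Classical in
noncomputable def liftOrZero (T : M →ₗ[R] N) (y : N) : M :=
  if y ∈ LinearMap.range T then invFun T y else 0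

theorem apply_liftOrZero {T : M →ₗ[R] N} {y : N} (hy : y ∈ LinearMap.range T) :
    T (liftOrZero T y) = y := by
  rw [liftOrZero, if_pos hy]
  exact invFun_eq hy

theorem liftOrZero_of_notMem {T : M →ₗ[R] N} {y : N} (hy : y ∉ LinearMap.range T) :
    liftOrZero T y = 0 :=
  if_neg hy

theorem liftOrZero_eq_zero_or_apply (T : M →ₗ[R] N) (y : N) :
    liftOrZero T y = 0 ∨ T (liftOrZero T y) = y := by
  by_cases hy : y ∈ LinearMap.range T
  · exact .inr (apply_liftOrZero hy)
  · exact .inl (liftOrZero_of_notMem hy)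

theorem isInternal_span_liftOrZero [Nontrivial R] (T : M →ₗ[R] N) {S : Set N}
    (hS : LinearIndepOn R id S)
    (hST : span R (S ∩ LinearMap.range T) = LinearMap.range T) {L : Set M}
    (hL : LinearIndepOn R id L) (hLT : span R L = LinearMap.ker T) {κ : Type*}
    [DecidableEq (S ⊕ κ)] (w : κ → M) (jL : L → κ) (hw : ∀ k, w (jL k) = k)
    (hw_supp : ∀ c, w c ≠ 0 → c ∈ range jL) :
    DirectSum.IsInternal fun i : S ⊕ κ => R ∙ Sum.elim (fun y : S => liftOrZero T y) w i := by
  have hlift : T ∘ (fun y : ↥(S ∩ LinearMap.range T) => liftOrZero T y) = Subtype.val :=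
    funext fun y => apply_liftOrZero y.2.2
  have hLT' : span R (range ((↑) : L → M)) = LinearMap.ker T := by rwa [Subtype.range_coe]
  refine DirectSum.isInternal_span_singleton_of_comp (Sum.map (inclusion inter_subset_left) jL)
    (b := Sum.elim (fun y : ↥(S ∩ LinearMap.range T) => liftOrZero T y) Subtype.val) ?_
    (linearIndependent_sum_elim_of_span_eq_ker T (by rw [hlift]; exact hS.mono inter_subset_left)
      hL hLT')
    (span_range_sum_elim_of_span_eq_ker T (by rw [hlift, Subtype.range_coe, hST]) hLT') ?_
  · rintro (y | k)
    · rfl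
    · exact hw k
  · rintro (y | c) h
    · by_cases hy : (y : N) ∈ LinearMap.range T
      · exact ⟨.inl ⟨y, y.2, hy⟩, rfl⟩
      · exact absurd (liftOrZero_of_notMem hy) h
    · obtain ⟨k, rfl⟩ := hw_supp c h
      exact ⟨.inr k, rfl⟩

end Lift

section Classification

variable {F U₁ U₂ U₃ : Type*} [DivisionRing F] [AddCommGroup U₁] [Module F U₁] [AddCommGroup U₂]
  [Module F U₂] [AddCommGroup U₃] [Module F U₃]

def IsStandardIndecomposable (A : U₁ →ₗ[F] U₂) (B : U₃ →ₗ[F] U₂) (W₁ : Submodule F U₁)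
    (W₂ : Submodule F U₂) (W₃ : Submodule F U₃) : Prop :=
  (Module.finrank F W₁ = 1 ∧ W₂ = ⊥ ∧ W₃ = ⊥) ∨
  (W₁ = ⊥ ∧ Module.finrank F W₂ = 1 ∧ W₃ = ⊥) ∨
  (W₁ = ⊥ ∧ W₂ = ⊥ ∧ Module.finrank F W₃ = 1) ∨
  (Module.finrank F W₁ = 1 ∧ Module.finrank F W₂ = 1 ∧ W₃ = ⊥ ∧ map A W₁ = W₂) ∨
  (W₁ = ⊥ ∧ Module.finrank F W₂ = 1 ∧ Module.finrank F W₃ = 1 ∧ map B W₃ = W₂) ∨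
  (Module.finrank F W₁ = 1 ∧ Module.finrank F W₂ = 1 ∧ Module.finrank F W₃ = 1 ∧
    map A W₁ = W₂ ∧ map B W₃ = W₂)

theorem isStandardIndecomposable_span_of_ne_zero {A : U₁ →ₗ[F] U₂} {B : U₃ →ₗ[F] U₂}
    {x₁ : U₁} {y : U₂} {x₃ : U₃} (hy : y ≠ 0) (h₁ : x₁ = 0 ∨ A x₁ = y) (h₃ : x₃ = 0 ∨ B x₃ = y) :
    IsStandardIndecomposable A B (F ∙ x₁) (F ∙ y) (F ∙ x₃) := by
  have hy₁ := finrank_span_singleton (K := F) hy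
  rcases h₁ with rfl | h₁ <;> rcases h₃ with rfl | h₃
  · exact .inr <| .inl ⟨span_zero_singleton F, hy₁, span_zero_singleton F⟩
  · have hx₃ : x₃ ≠ 0 := ne_of_apply_ne B (by rwa [h₃, map_zero])
    exact .inr <| .inr <| .inr <| .inr <| .inl ⟨span_zero_singleton F, hy₁,
      finrank_span_singleton hx₃, by rw [map_span_singleton, h₃]⟩
  · have hx₁ : x₁ ≠ 0 := ne_of_apply_ne A (by rwa [h₁, map_zero])
    exact .inr <| .inr <| .inr <| .inl ⟨finrank_span_singleton hx₁, hy₁, span_zero_singleton F,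
      by rw [map_span_singleton, h₁]⟩
  · have hx₁ : x₁ ≠ 0 := ne_of_apply_ne A (by rwa [h₁, map_zero])
    have hx₃ : x₃ ≠ 0 := ne_of_apply_ne B (by rwa [h₃, map_zero])
    exact .inr <| .inr <| .inr <| .inr <| .inr ⟨finrank_span_singleton hx₁, hy₁,
      finrank_span_singleton hx₃, by rw [map_span_singleton, h₁], by rw [map_span_singleton, h₃]⟩

theorem isStandardIndecomposable_span_left {A : U₁ →ₗ[F] U₂} {B : U₃ →ₗ[F] U₂} {x : U₁}
    (hx : x ≠ 0) : IsStandardIndecomposable A B (F ∙ x) (F ∙ 0) (F ∙ 0) :=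
  .inl ⟨finrank_span_singleton hx, span_zero_singleton F, span_zero_singleton F⟩

theorem isStandardIndecomposable_span_right {A : U₁ →ₗ[F] U₂} {B : U₃ →ₗ[F] U₂} {x : U₃}
    (hx : x ≠ 0) : IsStandardIndecomposable A B (F ∙ 0) (F ∙ 0) (F ∙ x) :=
  .inr <| .inr <| .inl ⟨span_zero_singleton F, span_zero_singleton F, finrank_span_singleton hx⟩

def IsStandardDecomposition {ι : Type*} [DecidableEq ι] (A : U₁ →ₗ[F] U₂) (B : U₃ →ₗ[F] U₂)
    (W₁ : ι → Submodule F U₁) (W₂ : ι → Submodule F U₂) (W₃ : ι → Submodule F U₃) : Prop :=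
  DirectSum.IsInternal W₁ ∧ DirectSum.IsInternal W₂ ∧ DirectSum.IsInternal W₃ ∧
    (∀ i, map A (W₁ i) ≤ W₂ i) ∧ (∀ i, map B (W₃ i) ≤ W₂ i) ∧
    ∀ i, IsStandardIndecomposable A B (W₁ i) (W₂ i) (W₃ i)

end Classification

theorem DirectSum.IsInternal.comp_equiv {R M ι ι' : Type*} [Ring R] [AddCommGroup M] [Module R M]
    [DecidableEq ι] [DecidableEq ι'] {W : ι → Submodule R M} (h : IsInternal W) (e : ι' ≃ ι) :
    IsInternal (W ∘ e) := by
  rw [isInternal_submodule_iff_iSupIndep_and_iSup_eq_top] at h ⊢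
  exact ⟨h.1.comp e.injective, by rw [← h.2]; exact e.iSup_comp⟩

theorem IsStandardDecomposition.comp_equiv {F U₁ U₂ U₃ ι ι' : Type*} [DivisionRing F]
    [AddCommGroup U₁] [Module F U₁] [AddCommGroup U₂] [Module F U₂] [AddCommGroup U₃] [Module F U₃]
    [DecidableEq ι] [DecidableEq ι'] {A : U₁ →ₗ[F] U₂} {B : U₃ →ₗ[F] U₂}
    {W₁ : ι → Submodule F U₁} {W₂ : ι → Submodule F U₂} {W₃ : ι → Submodule F U₃}
    (h : IsStandardDecomposition A B W₁ W₂ W₃) (e : ι' ≃ ι) :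
    IsStandardDecomposition A B (W₁ ∘ e) (W₂ ∘ e) (W₃ ∘ e) :=
  ⟨h.1.comp_equiv e, h.2.1.comp_equiv e, h.2.2.1.comp_equiv e, fun i => h.2.2.2.1 (e i),
    fun i => h.2.2.2.2.1 (e i), fun i => h.2.2.2.2.2 (e i)⟩

universe u₁ u₂ u₃

theorem exists_isStandardDecomposition {F : Type*} {U₁ : Type u₁} {U₂ : Type u₂} {U₃ : Type u₃}
    [DivisionRing F] [AddCommGroup U₁] [Module F U₁] [FiniteDimensional F U₁]
    [AddCommGroup U₂] [Module F U₂] [FiniteDimensional F U₂]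
    [AddCommGroup U₃] [Module F U₃] [FiniteDimensional F U₃]
    (A : U₁ →ₗ[F] U₂) (B : U₃ →ₗ[F] U₂) :
    ∃ (ι : Type (max u₂ u₁ u₃)) (_ : Finite ι) (_ : DecidableEq ι) (W₁ : ι → Submodule F U₁)
      (W₂ : ι → Submodule F U₂) (W₃ : ι → Submodule F U₃),
      IsStandardDecomposition A B W₁ W₂ W₃ := by
  classical
  obtain ⟨S, hS, hS_top, hSA, hSB⟩ :=
    exists_linearIndepOn_id_span_inter_eq (LinearMap.range A) (LinearMap.range B)
  obtain ⟨KA, hKA_le, hKA_span, hKA⟩ := exists_linearIndependent F (LinearMap.ker A : Set U₁)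
  obtain ⟨KB, hKB_le, hKB_span, hKB⟩ := exists_linearIndependent F (LinearMap.ker B : Set U₃)
  rw [span_eq] at hKA_span hKB_span
  have : Finite S := LinearIndependent.finite_of_isNoetherian hS
  have : Finite KA := hKA.finite_of_isNoetherian
  have : Finite KB := hKB.finite_of_isNoetherian
  let w₁ : KA ⊕ KB → U₁ := Sum.elim (↑) 0
  let w₃ : KA ⊕ KB → U₃ := Sum.elim 0 (↑)
  let v₁ : S ⊕ (KA ⊕ KB) → U₁ := Sum.elim (fun y => liftOrZero A y) w₁
  let v₂ : S ⊕ (KA ⊕ KB) → U₂ := Sum.elim (↑) 0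
  let v₃ : S ⊕ (KA ⊕ KB) → U₃ := Sum.elim (fun y => liftOrZero B y) w₃
  have h₁ (i) : v₁ i = 0 ∨ A (v₁ i) = v₂ i := by
    rcases i with y | a | b
    exacts [liftOrZero_eq_zero_or_apply A y, .inr (hKA_le a.2), .inl rfl]
  have h₃ (i) : v₃ i = 0 ∨ B (v₃ i) = v₂ i := by
    rcases i with y | a | b
    exacts [liftOrZero_eq_zero_or_apply B y, .inl rfl, .inr (hKB_le b.2)]
  refine ⟨S ⊕ (KA ⊕ KB), inferInstance, inferInstance, fun i => F ∙ v₁ i,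
    fun i => F ∙ v₂ i, fun i => F ∙ v₃ i, ?_, ?_, ?_, fun i => map_span_singleton_le (h₁ i),
    fun i => map_span_singleton_le (h₃ i), ?_⟩
  · refine isInternal_span_liftOrZero A hS hSA hKA hKA_span w₁ Sum.inl (fun _ => rfl) ?_
    rintro (a | b) h
    exacts [⟨a, rfl⟩, absurd rfl h]
  · exact DirectSum.isInternal_span_sum_elim_zero hS (by rwa [Subtype.range_coe])
  · refine isInternal_span_liftOrZero B hS hSB hKB hKB_span w₃ Sum.inr (fun _ => rfl) ?_
    rintro (a | b) h
    exacts [absurd rfl h, ⟨b, rfl⟩]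
  · rintro (y | a | b)
    · exact isStandardIndecomposable_span_of_ne_zero (hS.ne_zero y.2) (h₁ _) (h₃ _)
    · exact isStandardIndecomposable_span_left (hKA.ne_zero a)
    · exact isStandardIndecomposable_span_right (hKB.ne_zero b)

theorem stmt_11 {F : Type*} [Field F] {U₁ U₂ U₃ : Type*}
    [AddCommGroup U₁] [Module F U₁] [FiniteDimensional F U₁]
    [AddCommGroup U₂] [Module F U₂] [FiniteDimensional F U₂]
    [AddCommGroup U₃] [Module F U₃] [FiniteDimensional F U₃]
    (A : U₁ →ₗ[F] U₂) (B : U₃ →ₗ[F] U₂) :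
    ∃ (ι : Type) (_ : Fintype ι) (_ : DecidableEq ι)
      (W₁ : ι → Submodule F U₁) (W₂ : ι → Submodule F U₂) (W₃ : ι → Submodule F U₃),
      DirectSum.IsInternal W₁ ∧ DirectSum.IsInternal W₂ ∧ DirectSum.IsInternal W₃ ∧
      (∀ i, Submodule.map A (W₁ i) ≤ W₂ i) ∧
      (∀ i, Submodule.map B (W₃ i) ≤ W₂ i) ∧
      ∀ i,
        -- L₁₁ : (F, 0, 0)
        (Module.finrank F (W₁ i) = 1 ∧ W₂ i = ⊥ ∧ W₃ i = ⊥) ∨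
        -- L₂₂ : (0, F, 0)
        (W₁ i = ⊥ ∧ Module.finrank F (W₂ i) = 1 ∧ W₃ i = ⊥) ∨
        -- L₃₃ : (0, 0, F)
        (W₁ i = ⊥ ∧ W₂ i = ⊥ ∧ Module.finrank F (W₃ i) = 1) ∨
        -- L₁₂ : (F → F, 0) with identity map
        (Module.finrank F (W₁ i) = 1 ∧ Module.finrank F (W₂ i) = 1 ∧ W₃ i = ⊥ ∧
          Submodule.map A (W₁ i) = W₂ i) ∨
        -- L₂₃ : (0, F ← F) with identity map
        (W₁ i = ⊥ ∧ Module.finrank F (W₂ i) = 1 ∧ Module.finrank F (W₃ i) = 1 ∧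
          Submodule.map B (W₃ i) = W₂ i) ∨
        -- L₁₃ : (F → F ← F) with both maps the identity
        (Module.finrank F (W₁ i) = 1 ∧ Module.finrank F (W₂ i) = 1 ∧
          Module.finrank F (W₃ i) = 1 ∧
          Submodule.map A (W₁ i) = W₂ i ∧ Submodule.map B (W₃ i) = W₂ i) := by
  obtain ⟨ι, _, _, W₁, W₂, W₃, h⟩ := exists_isStandardDecomposition A B
  exact ⟨Fin (Nat.card ι), inferInstance, inferInstance, _, _, _,
    h.comp_equiv (Finite.equivFin ι).symm⟩
end

section
/- Let A : U₁ → U₂ and B : U₃ → U₂ be linear maps of finite-dimensional vector spaces over a field F, and let A' : V₁ → V₂, B' : V₃ → V₂ be another such pair. If dim Uᵢ = dim Vᵢ for i = 1,2,3, rank A = rank A', rank B = rank B', and dim(range A ∩ range B) = dim(range A' ∩ range B'), then there exist linear bijections φᵢ : Uᵢ → Vᵢ (i = 1,2,3) with φ₂ ∘ A = A' ∘ φ₁ and φ₂ ∘ B = B' ∘ φ₃. -/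
/-!
Complete `range A ⊓ range B` to `range A`, to `range B`, and `range A ⊔ range B` to all of `U₂`.
The resulting four summands of `U₂` have dimensions fixed by the given invariants, so matching
them one by one yields `φ₂` with `φ₂ (range A) = range A'` and `φ₂ (range B) = range B'`. Two maps
with the same range from spaces of the same dimension differ by an automorphism of the source
(match the kernels, and a complement of each kernel with the common range), which gives `φ₁`
and `φ₃`.
-/

open Module Submodule LinearMap

section Glue

variable {R M M' : Type*} [Semiring R] [AddCommMonoid M] [Module R M]
  [AddCommMonoid M'] [Module R M']

theorem Submodule.map_eq_of_apply_eq (E : M ≃ₗ[R] M') {p : Submodule R M}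
    {p' : Submodule R M'} (e : p ≃ₗ[R] p') (h : ∀ x : p, E x = e x) :
    p.map (E : M →ₗ[R] M') = p' := by
  have hcomp : (E : M →ₗ[R] M') ∘ₗ p.subtype = p'.subtype ∘ₗ (e : p →ₗ[R] p') :=
    LinearMap.ext h
  rw [← p.range_subtype, ← range_comp, hcomp, range_comp, LinearEquiv.range, map_top,
    range_subtype]

theorem DirectSum.IsInternal.exists_linearEquiv_map_eq {ι : Type*} [DecidableEq ι]
    {p : ι → Submodule R M} {p' : ι → Submodule R M'} (h : DirectSum.IsInternal p)
    (h' : DirectSum.IsInternal p') (e : ∀ i, p i ≃ₗ[R] p' i) :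
    ∃ E : M ≃ₗ[R] M', ∀ i, (p i).map (E : M →ₗ[R] M') = p' i := by
  let g := LinearEquiv.ofBijective (DirectSum.coeLinearMap p) h
  let g' := LinearEquiv.ofBijective (DirectSum.coeLinearMap p') h'
  let E := g.symm ≪≫ₗ DFinsupp.mapRange.linearEquiv e ≪≫ₗ g'
  refine ⟨E, fun i => Submodule.map_eq_of_apply_eq E (e i) fun x => ?_⟩
  have hx : g.symm x = DirectSum.of (fun i => p i) i x :=
    g.symm_apply_eq.2 (DirectSum.coeLinearMap_of p i x).symm
  simp only [E, LinearEquiv.trans_apply, hx]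
  change DirectSum.coeLinearMap p' (DFinsupp.mapRange (fun i (y : p i) => e i y)
    (fun i => map_zero (e i)) (DFinsupp.single i x)) = _
  rw [DFinsupp.mapRange_single]
  exact DirectSum.coeLinearMap_of p' i (e i x)

end Glue

section Decomposition

variable {K M M' : Type*} [DivisionRing K] [AddCommGroup M] [Module K M]
  [AddCommGroup M'] [Module K M'] [FiniteDimensional K M]

theorem DirectSum.isInternal_of_iSup_eq_top_of_sum_finrank_eq {ι : Type*} [Fintype ι]
    [DecidableEq ι] {p : ι → Submodule K M} (htop : iSup p = ⊤)
    (hdim : ∑ i, finrank K (p i) = finrank K M) : DirectSum.IsInternal p := by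
  have hsurj : Function.Surjective (DirectSum.coeLinearMap p) := by
    rw [← range_eq_top, DirectSum.range_coeLinearMap, htop]
  refine ⟨(injective_iff_surjective_of_finrank_eq_finrank ?_).2 hsurj, hsurj⟩
  rw [finrank_directSum, hdim]

theorem DirectSum.IsInternal.sum_finrank {ι : Type*} [Fintype ι] [DecidableEq ι]
    {c : ι → Submodule K M} (h : DirectSum.IsInternal c) :
    ∑ i, finrank K (c i) = finrank K M := by
  rw [← finrank_directSum, (LinearEquiv.ofBijective (DirectSum.coeLinearMap c) h).finrank_eq]

theorem DirectSum.IsInternal.finrank_sup {ι : Type*} [DecidableEq ι] {c : ι → Submodule K M}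
    (h : DirectSum.IsInternal c) {i j : ι} (hij : i ≠ j) :
    finrank K ↥(c i ⊔ c j) = finrank K (c i) + finrank K (c j) := by
  rw [← finrank_sup_add_finrank_inf_eq, (h.submodule_iSupIndep.pairwiseDisjoint hij).eq_bot,
    finrank_bot, add_zero]

theorem Submodule.exists_isInternal_inf_sup (P Q : Submodule K M) :
    ∃ c : Fin 4 → Submodule K M,
      DirectSum.IsInternal c ∧ c 0 = P ⊓ Q ∧ c 0 ⊔ c 1 = P ∧ c 0 ⊔ c 2 = Q := by
  obtain ⟨CP, hCP, hCPP⟩ := IsModularLattice.exists_disjoint_and_sup_eq (inf_le_left : P ⊓ Q ≤ P)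
  obtain ⟨CQ, hCQ, hCQQ⟩ :=
    IsModularLattice.exists_disjoint_and_sup_eq (inf_le_right : P ⊓ Q ≤ Q)
  obtain ⟨D, hD⟩ := Submodule.exists_isCompl (P ⊔ Q)
  refine ⟨![P ⊓ Q, CP, CQ, D], ?_, rfl, hCPP, hCQQ⟩
  apply DirectSum.isInternal_of_iSup_eq_top_of_sum_finrank_eq
  · have hPCQ : P ⊔ CQ = P ⊔ Q := by
      conv_rhs => rw [← hCQQ, ← sup_assoc, sup_inf_self]
    rw [eq_top_iff, ← hD.sup_eq_top, ← hPCQ]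
    conv_lhs => rw [← hCPP]
    let c := ![P ⊓ Q, CP, CQ, D]
    exact sup_le (sup_le (sup_le (le_iSup c 0) (le_iSup c 1)) (le_iSup c 2)) (le_iSup c 3)
  · have hP := finrank_sup_add_finrank_inf_eq (P ⊓ Q) CP
    have hQ := finrank_sup_add_finrank_inf_eq (P ⊓ Q) CQ
    have hM := finrank_sup_add_finrank_inf_eq (P ⊔ Q) D
    have hPQ := finrank_sup_add_finrank_inf_eq P Q
    rw [hCP.eq_bot, hCPP, finrank_bot] at hP
    rw [hCQ.eq_bot, hCQQ, finrank_bot] at hQ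
    rw [hD.inf_eq_bot, hD.sup_eq_top, finrank_top, finrank_bot] at hM
    rw [Fin.sum_univ_four]
    change finrank K ↥(P ⊓ Q) + finrank K CP + finrank K CQ + finrank K D = finrank K M
    omega

theorem Submodule.exists_linearEquiv_map_eq_map_eq [FiniteDimensional K M']
    {P Q : Submodule K M} {P' Q' : Submodule K M'}
    (hM : finrank K M = finrank K M') (hP : finrank K P = finrank K P')
    (hQ : finrank K Q = finrank K Q') (hPQ : finrank K ↥(P ⊓ Q) = finrank K ↥(P' ⊓ Q')) :
    ∃ E : M ≃ₗ[K] M', P.map (E : M →ₗ[K] M') = P' ∧ Q.map (E : M →ₗ[K] M') = Q' := by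
  obtain ⟨c, hc, hc0, hc1, hc2⟩ := exists_isInternal_inf_sup P Q
  obtain ⟨c', hc', hc0', hc1', hc2'⟩ := exists_isInternal_inf_sup P' Q'
  have h0 : finrank K (c 0) = finrank K (c' 0) := by rw [hc0, hc0', hPQ]
  have h1 : finrank K (c 1) = finrank K (c' 1) := by
    have hsum := hc.finrank_sup (by decide : (0 : Fin 4) ≠ 1)
    have hsum' := hc'.finrank_sup (by decide : (0 : Fin 4) ≠ 1)
    rw [hc1] at hsum
    rw [hc1'] at hsum'
    omega
  have h2 : finrank K (c 2) = finrank K (c' 2) := by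
    have hsum := hc.finrank_sup (by decide : (0 : Fin 4) ≠ 2)
    have hsum' := hc'.finrank_sup (by decide : (0 : Fin 4) ≠ 2)
    rw [hc2] at hsum
    rw [hc2'] at hsum'
    omega
  have h3 : finrank K (c 3) = finrank K (c' 3) := by
    have hsum := hc.sum_finrank
    have hsum' := hc'.sum_finrank
    rw [Fin.sum_univ_four] at hsum hsum'
    omega
  have hdim : ∀ i, finrank K (c i) = finrank K (c' i) := by
    intro i
    fin_cases i
    exacts [h0, h1, h2, h3]
  obtain ⟨E, hE⟩ :=
    hc.exists_linearEquiv_map_eq hc' fun i => LinearEquiv.ofFinrankEq _ _ (hdim i)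
  refine ⟨E, ?_, ?_⟩
  · rw [← hc1, ← hc1', map_sup, hE, hE]
  · rw [← hc2, ← hc2', map_sup, hE, hE]

end Decomposition

section SameRange

variable {R K U U' N : Type*}

noncomputable def LinearMap.complKerEquivRange [Ring R] [AddCommGroup U] [Module R U]
    [AddCommGroup N] [Module R N] (f : U →ₗ[R] N) {W : Submodule R U}
    (hW : IsCompl (ker f) W) : W ≃ₗ[R] range f :=
  (quotientEquivOfIsCompl _ _ hW).symm ≪≫ₗ f.quotKerEquivRange

@[simp]
theorem LinearMap.coe_complKerEquivRange_apply [Ring R] [AddCommGroup U] [Module R U]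
    [AddCommGroup N] [Module R N] (f : U →ₗ[R] N) {W : Submodule R U}
    (hW : IsCompl (ker f) W) (w : W) : (f.complKerEquivRange hW w : N) = f w := by
  simp [complKerEquivRange]

theorem LinearMap.exists_linearEquiv_comp_eq_of_range_eq [DivisionRing K] [AddCommGroup U]
    [Module K U] [FiniteDimensional K U] [AddCommGroup U'] [Module K U'] [FiniteDimensional K U']
    [AddCommGroup N] [Module K N] {f : U →ₗ[K] N} {g : U' →ₗ[K] N} (hfg : range f = range g)
    (hUU' : finrank K U = finrank K U') :
    ∃ φ : U ≃ₗ[K] U', g ∘ₗ (φ : U →ₗ[K] U') = f := by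
  obtain ⟨W, hW⟩ := Submodule.exists_isCompl (ker f)
  obtain ⟨W', hW'⟩ := Submodule.exists_isCompl (ker g)
  have hker : finrank K (ker f) = finrank K (ker g) := by
    have hf := f.finrank_range_add_finrank_ker
    have hg := g.finrank_range_add_finrank_ker
    rw [hfg] at hf
    omega
  let eW := f.complKerEquivRange hW ≪≫ₗ LinearEquiv.ofEq _ _ hfg ≪≫ₗ
    (g.complKerEquivRange hW').symm
  let φ := (prodEquivOfIsCompl _ _ hW).symm ≪≫ₗ
    (LinearEquiv.ofFinrankEq _ _ hker).prodCongr eW ≪≫ₗ prodEquivOfIsCompl _ _ hW'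
  refine ⟨φ, ext_on_codisjoint hW.codisjoint (fun k hk => ?_) (fun w hw => ?_)⟩
  · have hφk : φ (⟨k, hk⟩ : ker f) = (LinearEquiv.ofFinrankEq _ _ hker ⟨k, hk⟩ : U') := by
      rw [LinearEquiv.trans_apply, LinearEquiv.trans_apply, prodEquivOfIsCompl_symm_apply_left]
      simp
    show g (φ (⟨k, hk⟩ : ker f)) = f k
    rw [hφk, mem_ker.1 hk, ← mem_ker]
    exact Submodule.coe_mem _
  · have hφw : φ (⟨w, hw⟩ : W) = (eW ⟨w, hw⟩ : U') := by
      rw [LinearEquiv.trans_apply, LinearEquiv.trans_apply, prodEquivOfIsCompl_symm_apply_right]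
      simp
    show g (φ (⟨w, hw⟩ : W)) = f w
    rw [hφw, ← coe_complKerEquivRange_apply g hW', LinearEquiv.trans_apply,
      LinearEquiv.trans_apply, LinearEquiv.apply_symm_apply, LinearEquiv.coe_ofEq_apply,
      coe_complKerEquivRange_apply]

end SameRange

theorem stmt_12 {F : Type*} [Field F] {U₁ U₂ U₃ V₁ V₂ V₃ : Type*}
    [AddCommGroup U₁] [Module F U₁] [FiniteDimensional F U₁]
    [AddCommGroup U₂] [Module F U₂] [FiniteDimensional F U₂]
    [AddCommGroup U₃] [Module F U₃] [FiniteDimensional F U₃]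
    [AddCommGroup V₁] [Module F V₁] [FiniteDimensional F V₁]
    [AddCommGroup V₂] [Module F V₂] [FiniteDimensional F V₂]
    [AddCommGroup V₃] [Module F V₃] [FiniteDimensional F V₃]
    (A : U₁ →ₗ[F] U₂) (B : U₃ →ₗ[F] U₂) (A' : V₁ →ₗ[F] V₂) (B' : V₃ →ₗ[F] V₂)
    (h1 : Module.finrank F U₁ = Module.finrank F V₁)
    (h2 : Module.finrank F U₂ = Module.finrank F V₂)
    (h3 : Module.finrank F U₃ = Module.finrank F V₃)
    (hA : Module.finrank F (LinearMap.range A) = Module.finrank F (LinearMap.range A'))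
    (hB : Module.finrank F (LinearMap.range B) = Module.finrank F (LinearMap.range B'))
    (hAB : Module.finrank F ↥(LinearMap.range A ⊓ LinearMap.range B) =
           Module.finrank F ↥(LinearMap.range A' ⊓ LinearMap.range B')) :
    ∃ (φ₁ : U₁ ≃ₗ[F] V₁) (φ₂ : U₂ ≃ₗ[F] V₂) (φ₃ : U₃ ≃ₗ[F] V₃),
      (∀ x, φ₂ (A x) = A' (φ₁ x)) ∧ (∀ x, φ₂ (B x) = B' (φ₃ x)) := by
  obtain ⟨φ₂, hA₂, hB₂⟩ := exists_linearEquiv_map_eq_map_eq h2 hA hB hAB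
  obtain ⟨φ₁, hφ₁⟩ := exists_linearEquiv_comp_eq_of_range_eq
    (f := (φ₂ : U₂ →ₗ[F] V₂) ∘ₗ A) (g := A') (by rw [range_comp, hA₂]) h1
  obtain ⟨φ₃, hφ₃⟩ := exists_linearEquiv_comp_eq_of_range_eq
    (f := (φ₂ : U₂ →ₗ[F] V₂) ∘ₗ B) (g := B') (by rw [range_comp, hB₂]) h3
  exact ⟨φ₁, φ₂, φ₃, fun x => (LinearMap.congr_fun hφ₁ x).symm,
    fun x => (LinearMap.congr_fun hφ₃ x).symm⟩
end
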